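/- For ν ∈ [0,1] and X ∈ B(H), the limit as ρ → 0⁺ of ρ·Δ_{ρ,ν}(X) equals 2 w(X + (1−2ν)X*), where Δ_{ρ,ν}(X) = w([[0, αX],[α(1−2ν)X*, β(X+(1−2ν)X*)]]) with α = √(8/ρ−4), β = 2/ρ−2. -/

import Mathlib

/-! Multiplying by `ρ` and pulling the scalar inside the block, `ρ Δ_{ρ,ν}(X)` is the numerical
radius of a block operator whose off-diagonal entries carry `ρα = √(8ρ - 4ρ²) → 0` and whose
corner carries `ρβ = 2 - 2ρ → 2`. The block operator depends continuously on its entries and the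
numerical radius is 1-Lipschitz for the operator norm, so the limit is the numerical radius of
the block whose only nonzero entry is the corner `2 (X + (1 - 2ν) X*)`, which is
`2 w(X + (1 - 2ν) X*)`. -/

open scoped InnerProductSpace

/-- Numerical radius of a bounded operator on a complex Hilbert space. -/
noncomputable def numRad {H : Type*} [NormedAddCommGroup H] [InnerProductSpace ℂ H]
    (T : H →L[ℂ] H) : ℝ :=
  ⨆ z : {z : H // ‖z‖ = 1}, ‖(⟪T z.1, z.1⟫_ℂ : ℂ)‖

/-- Crawford number. -/
noncomputable def crawford {H : Type*} [NormedAddCommGroup H] [InnerProductSpace ℂ H]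
    (T : H →L[ℂ] H) : ℝ :=
  ⨅ z : {z : H // ‖z‖ = 1}, ‖(⟪T z.1, z.1⟫_ℂ : ℂ)‖

/-- The 2×2 block operator matrix `[[A, B], [C, D]]` acting on `H ⊕ H`
(the ℓ² direct sum `WithLp 2 (H × H)`), sending `(x, y)` to `(Ax + By, Cx + Dy)`. -/
noncomputable def blk {H : Type*} [NormedAddCommGroup H] [InnerProductSpace ℂ H]
    (A B C D : H →L[ℂ] H) : WithLp 2 (H × H) →L[ℂ] WithLp 2 (H × H) :=
  (((WithLp.prodContinuousLinearEquiv 2 ℂ H H).symm.toContinuousLinearMap).comp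
    (((A.comp (ContinuousLinearMap.fst ℂ H H) + B.comp (ContinuousLinearMap.snd ℂ H H)).prod
      (C.comp (ContinuousLinearMap.fst ℂ H H) + D.comp (ContinuousLinearMap.snd ℂ H H))))).comp
    ((WithLp.prodContinuousLinearEquiv 2 ℂ H H).toContinuousLinearMap)

/-- The function `Δ_{(ρ,ν)}`: the numerical radius of the block operator
`[[0, αX], [α(1−2ν)X*, β(X+(1−2ν)X*)]]` with `α = √(8/ρ−4)`, `β = 2/ρ−2`. -/
noncomputable def Delta {H : Type*} [NormedAddCommGroup H] [InnerProductSpace ℂ H]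
    [CompleteSpace H] (ρ ν : ℝ) (X : H →L[ℂ] H) : ℝ :=
  numRad (blk 0 (((Real.sqrt (8/ρ - 4) : ℝ) : ℂ) • X)
    (((Real.sqrt (8/ρ - 4) * (1 - 2*ν) : ℝ) : ℂ) • X.adjoint)
    (((2/ρ - 2 : ℝ) : ℂ) • (X + ((1 - 2*ν : ℝ) : ℂ) • X.adjoint)))

open Filter Topology

section NumericalRadius

variable {H : Type*} [NormedAddCommGroup H] [InnerProductSpace ℂ H]

lemma norm_inner_apply_self_le_opNorm (T : H →L[ℂ] H) (z : H) :
    ‖⟪T z, z⟫_ℂ‖ ≤ ‖T‖ * ‖z‖ ^ 2 :=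
  calc ‖⟪T z, z⟫_ℂ‖ ≤ ‖T z‖ * ‖z‖ := norm_inner_le_norm _ _
    _ ≤ ‖T‖ * ‖z‖ * ‖z‖ := by gcongr; exact T.le_opNorm z
    _ = ‖T‖ * ‖z‖ ^ 2 := by ring

lemma numRad_nonneg (T : H →L[ℂ] H) : 0 ≤ numRad T :=
  Real.iSup_nonneg fun _ => norm_nonneg _

lemma le_numRad (T : H →L[ℂ] H) {z : H} (hz : ‖z‖ = 1) : ‖⟪T z, z⟫_ℂ‖ ≤ numRad T := by
  refine le_ciSup (f := fun z : {z : H // ‖z‖ = 1} => ‖⟪T z.1, z.1⟫_ℂ‖) ⟨‖T‖, ?_⟩ ⟨z, hz⟩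
  rintro _ ⟨w, rfl⟩
  simpa [w.2] using norm_inner_apply_self_le_opNorm T w.1

lemma norm_inner_apply_self_le_numRad (T : H →L[ℂ] H) (y : H) :
    ‖⟪T y, y⟫_ℂ‖ ≤ numRad T * ‖y‖ ^ 2 := by
  rcases eq_or_ne y 0 with rfl | hy
  · simp
  have hy' : (‖y‖ : ℂ) ≠ 0 := by exact_mod_cast norm_ne_zero_iff.mpr hy
  set u : H := (‖y‖ : ℂ)⁻¹ • y
  have hu : ‖u‖ = 1 := by simp [u, norm_smul, norm_ne_zero_iff.mpr hy]
  have hyu : y = (‖y‖ : ℂ) • u := by simp [u, smul_smul, hy']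
  calc ‖⟪T y, y⟫_ℂ‖ = ‖⟪T u, u⟫_ℂ‖ * ‖y‖ ^ 2 := by
        conv_lhs => rw [hyu]
        simp only [map_smul, inner_smul_left, inner_smul_right, norm_mul, RCLike.norm_conj,
          Complex.norm_real, norm_norm]
        ring
    _ ≤ numRad T * ‖y‖ ^ 2 := by gcongr; exact le_numRad T hu

lemma numRad_le_numRad_add_norm_sub (S T : H →L[ℂ] H) : numRad S ≤ numRad T + ‖S - T‖ := by
  refine Real.iSup_le (fun z => ?_) (add_nonneg (numRad_nonneg T) (norm_nonneg _))
  calc ‖⟪S z.1, z.1⟫_ℂ‖ = ‖⟪T z.1, z.1⟫_ℂ + ⟪(S - T) z.1, z.1⟫_ℂ‖ := by simp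
    _ ≤ ‖⟪T z.1, z.1⟫_ℂ‖ + ‖⟪(S - T) z.1, z.1⟫_ℂ‖ := norm_add_le _ _
    _ ≤ numRad T + ‖S - T‖ := by
        gcongr
        · exact le_numRad T z.2
        · simpa [z.2] using norm_inner_apply_self_le_opNorm (S - T) z.1

lemma lipschitzWith_one_numRad : LipschitzWith 1 (numRad : (H →L[ℂ] H) → ℝ) :=
  .of_le_add fun S T => by simpa [dist_eq_norm] using numRad_le_numRad_add_norm_sub S T

lemma numRad_smul (c : ℂ) (T : H →L[ℂ] H) : numRad (c • T) = ‖c‖ * numRad T := by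
  simp only [numRad, smul_apply, inner_smul_left, norm_mul, RCLike.norm_conj,
    Real.mul_iSup_of_nonneg (norm_nonneg c)]

end NumericalRadius

section BlockOperator

variable {H : Type*} [NormedAddCommGroup H] [InnerProductSpace ℂ H]

@[simp] lemma blk_apply_fst (A B C D : H →L[ℂ] H) (p : WithLp 2 (H × H)) :
    (blk A B C D p).fst = A p.fst + B p.snd := rfl

@[simp] lemma blk_apply_snd (A B C D : H →L[ℂ] H) (p : WithLp 2 (H × H)) :
    (blk A B C D p).snd = C p.fst + D p.snd := rfl

lemma smul_blk (c : ℂ) (A B C D : H →L[ℂ] H) :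
    c • blk A B C D = blk (c • A) (c • B) (c • C) (c • D) := by
  ext p : 1
  exact WithLp.ofLp_injective 2 (Prod.ext (by simp [smul_add]) (by simp [smul_add]))

theorem Continuous.blk {α : Type*} [TopologicalSpace α] {A B C D : α → H →L[ℂ] H}
    (hA : Continuous A) (hB : Continuous B) (hC : Continuous C) (hD : Continuous D) :
    Continuous fun t => _root_.blk (A t) (B t) (C t) (D t) := by
  refine (Continuous.clm_comp continuous_const ?_).clm_comp continuous_const
  exact (ContinuousLinearMap.prodₗᵢ ℂ).continuous.comp (.prodMk (by fun_prop) (by fun_prop))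

theorem Filter.Tendsto.blk {α : Type*} {l : Filter α} {A B C D : α → H →L[ℂ] H}
    {A₀ B₀ C₀ D₀ : H →L[ℂ] H} (hA : Tendsto A l (𝓝 A₀)) (hB : Tendsto B l (𝓝 B₀))
    (hC : Tendsto C l (𝓝 C₀)) (hD : Tendsto D l (𝓝 D₀)) :
    Tendsto (fun t => _root_.blk (A t) (B t) (C t) (D t)) l (𝓝 (_root_.blk A₀ B₀ C₀ D₀)) := by
  have hcont : Continuous fun M : (H →L[ℂ] H) × (H →L[ℂ] H) × (H →L[ℂ] H) × (H →L[ℂ] H) =>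
      _root_.blk M.1 M.2.1 M.2.2.1 M.2.2.2 :=
    .blk continuous_fst (by fun_prop) (by fun_prop) (by fun_prop)
  exact (hcont.tendsto (A₀, B₀, C₀, D₀)).comp (f := fun t => (A t, B t, C t, D t))
    (hA.prodMk_nhds (hB.prodMk_nhds (hC.prodMk_nhds hD)))

lemma numRad_blk_zero_zero_zero (S : H →L[ℂ] H) : numRad (blk 0 0 0 S) = numRad S := by
  have hinner (p : WithLp 2 (H × H)) : ⟪blk 0 0 0 S p, p⟫_ℂ = ⟪S p.snd, p.snd⟫_ℂ := by
    simp [WithLp.prod_inner_apply]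
  refine le_antisymm (Real.iSup_le (fun p => ?_) (numRad_nonneg S))
    (Real.iSup_le (fun z => ?_) (numRad_nonneg _))
  · have hsnd : ‖p.1.snd‖ ≤ 1 := (WithLp.norm_snd_le H p.1).trans_eq p.2
    calc ‖⟪blk 0 0 0 S p.1, p.1⟫_ℂ‖ = ‖⟪S p.1.snd, p.1.snd⟫_ℂ‖ := by rw [hinner]
      _ ≤ numRad S * ‖p.1.snd‖ ^ 2 := norm_inner_apply_self_le_numRad S _
      _ ≤ numRad S :=
          mul_le_of_le_one_right (numRad_nonneg S) (pow_le_one₀ (norm_nonneg _) hsnd)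
  · have hp : ‖WithLp.toLp 2 ((0 : H), z.1)‖ = 1 := by simp [z.2]
    simpa [hinner] using le_numRad (blk 0 0 0 S) hp

end BlockOperator

lemma tendsto_mul_sqrt_eight_div_sub_four :
    Tendsto (fun ρ : ℝ => ρ * Real.sqrt (8 / ρ - 4)) (𝓝[>] 0) (𝓝 0) := by
  have hlim : Tendsto (fun ρ : ℝ => Real.sqrt (8 * ρ - 4 * ρ ^ 2)) (𝓝[>] 0) (𝓝 0) := by
    have hcont : Continuous fun ρ : ℝ => Real.sqrt (8 * ρ - 4 * ρ ^ 2) := by fun_prop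
    simpa using (hcont.tendsto 0).mono_left nhdsWithin_le_nhds
  refine hlim.congr' (eventually_nhdsWithin_of_forall fun ρ (hρ : 0 < ρ) => ?_)
  have hsq : 8 * ρ - 4 * ρ ^ 2 = ρ ^ 2 * (8 / ρ - 4) := by field_simp
  rw [hsq, Real.sqrt_mul (sq_nonneg ρ), Real.sqrt_sq hρ.le]

lemma tendsto_mul_two_div_sub_two :
    Tendsto (fun ρ : ℝ => ρ * (2 / ρ - 2)) (𝓝[>] 0) (𝓝 2) := by
  have hlim : Tendsto (fun ρ : ℝ => 2 - 2 * ρ) (𝓝[>] 0) (𝓝 2) := by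
    have hcont : Continuous fun ρ : ℝ => 2 - 2 * ρ := by fun_prop
    simpa using (hcont.tendsto 0).mono_left nhdsWithin_le_nhds
  refine hlim.congr' (eventually_nhdsWithin_of_forall fun ρ (hρ : 0 < ρ) => ?_)
  field_simp

theorem Delta_limit_rho_zero_general {H : Type*} [NormedAddCommGroup H] [InnerProductSpace ℂ H]
    [CompleteSpace H] {ν : ℝ} (X : H →L[ℂ] H) :
    Filter.Tendsto (fun ρ : ℝ => ρ * Delta ρ ν X) (nhdsWithin 0 (Set.Ioi 0))
      (nhds (2 * numRad (X + ((1 - 2*ν : ℝ) : ℂ) • X.adjoint))) := by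
  set Y := X + ((1 - 2*ν : ℝ) : ℂ) • X.adjoint
  let M (ρ : ℝ) : WithLp 2 (H × H) →L[ℂ] WithLp 2 (H × H) :=
    blk 0 (((ρ * Real.sqrt (8 / ρ - 4) : ℝ) : ℂ) • X)
      (((ρ * Real.sqrt (8 / ρ - 4) * (1 - 2 * ν) : ℝ) : ℂ) • X.adjoint)
      (((ρ * (2 / ρ - 2) : ℝ) : ℂ) • Y)
  have hDelta : ∀ ρ > (0 : ℝ), ρ * Delta ρ ν X = numRad (M ρ) := by
    intro ρ hρ
    calc ρ * Delta ρ ν X = ‖(ρ : ℂ)‖ * Delta ρ ν X := by simp [abs_of_pos hρ]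
      _ = numRad (M ρ) := by
        rw [Delta, ← numRad_smul, smul_blk]
        simp only [M, smul_zero, smul_smul, ← Complex.ofReal_mul, mul_assoc]
        rfl
  have hM : Tendsto M (𝓝[>] 0) (𝓝 (blk 0 0 0 ((2 : ℂ) • Y))) := by
    have h := (tendsto_const_nhds (x := 0)).blk
      (tendsto_mul_sqrt_eight_div_sub_four.ofReal.smul_const X)
      ((tendsto_mul_sqrt_eight_div_sub_four.mul_const (1 - 2 * ν)).ofReal.smul_const X.adjoint)
      (tendsto_mul_two_div_sub_two.ofReal.smul_const Y)
    simp only [zero_mul, Complex.ofReal_zero, zero_smul, Complex.ofReal_ofNat] at h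
    exact h
  have hlim : numRad (blk 0 0 0 ((2 : ℂ) • Y)) = 2 * numRad Y := by
    simp [numRad_blk_zero_zero_zero, numRad_smul]
  rw [← hlim]
  refine ((lipschitzWith_one_numRad.continuous.tendsto _).comp hM).congr' ?_
  filter_upwards [self_mem_nhdsWithin] with ρ hρ
  exact (hDelta ρ hρ).symm

theorem Delta_limit_rho_zero {H : Type*} [NormedAddCommGroup H] [InnerProductSpace ℂ H]
    [CompleteSpace H] {ν : ℝ} (hν : ν ∈ Set.Icc (0 : ℝ) 1) (X : H →L[ℂ] H) :
    Filter.Tendsto (fun ρ : ℝ => ρ * Delta ρ ν X) (nhdsWithin 0 (Set.Ioi 0))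
      (nhds (2 * numRad (X + ((1 - 2*ν : ℝ) : ℂ) • X.adjoint))) :=
  Delta_limit_rho_zero_general X
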